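/- arXiv:2508.11241 — 5 statements merged into one kernel-verified Lean document; each statement's English description precedes it below -/
import Mathlib

section
/- Fix N ≥ 1, initial data θ₁⁰,…,θ_N⁰, ω₁⁰,…,ω_N⁰ ∈ ℝ, natural frequencies ν₁,…,ν_N ∈ ℝ, and κ > 0. For m > 0 let θ₁(m,t),…,θ_N(m,t) denote the solution of the inertial Kuramoto model with these data, and let θ₁(0,t),…,θ_N(0,t) denote the solution of the first-order Kuramoto model with initial data θ₁⁰,…,θ_N⁰. Then for every i ∈ {1,…,N} and every t ≥ 0, |θᵢ(m,t) − θᵢ(0,t)| ≤ m (2 max_{j∈[N]} |ωⱼ⁰ − νⱼ| + κ) e^{2κt}. -/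
open Filter Topology MeasureTheory intervalIntegral
open Set

noncomputable section

/-- A global smooth solution of the inertial Kuramoto model
`m θ̈ᵢ + θ̇ᵢ = νᵢ + (κ/N) ∑ⱼ sin(θⱼ - θᵢ)` with initial data `θᵢ(0) = θ0 i`,
`θ̇ᵢ(0) = ω0 i`. -/
def IsInertialSol (N : ℕ) (m κ : ℝ) (ν θ0 ω0 : Fin N → ℝ) (θ : Fin N → ℝ → ℝ) : Prop :=
  (∀ i, ContDiff ℝ (⊤ : ℕ∞) (θ i)) ∧
  (∀ i, θ i 0 = θ0 i) ∧
  (∀ i, deriv (θ i) 0 = ω0 i) ∧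
  (∀ i, ∀ t : ℝ, 0 ≤ t →
    m * deriv (deriv (θ i)) t + deriv (θ i) t
      = ν i + (κ / N) * ∑ j, Real.sin (θ j t - θ i t))

/-- A global smooth solution of the first-order Kuramoto model
`θ̇ᵢ = νᵢ + (κ/N) ∑ⱼ sin(θⱼ - θᵢ)` with initial data `θᵢ(0) = θ0 i`. -/
def IsFirstOrderSol (N : ℕ) (κ : ℝ) (ν θ0 : Fin N → ℝ) (θ : Fin N → ℝ → ℝ) : Prop :=
  (∀ i, ContDiff ℝ (⊤ : ℕ∞) (θ i)) ∧
  (∀ i, θ i 0 = θ0 i) ∧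
  (∀ i, ∀ t : ℝ, 0 ≤ t →
    deriv (θ i) t = ν i + (κ / N) * ∑ j, Real.sin (θ j t - θ i t))

lemma vel_bound (N : ℕ) (m κ : ℝ) (ν θ0 ω0 : Fin N → ℝ) (θ : Fin N → ℝ → ℝ)
    (hκ : 0 < κ) (hm : 0 < m) (hN : 1 ≤ N)
    (h : IsInertialSol N m κ ν θ0 ω0 θ) (i : Fin N) (t : ℝ) (ht : 0 ≤ t) :
    |deriv (θ i) t - ν i| ≤ |ω0 i - ν i| + κ := by
  obtain ⟨hsm, hi0, hiv, hode⟩ := h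
  -- the coupling term is bounded by κ
  have hS : ∀ s : ℝ, |(κ / N) * ∑ j, Real.sin (θ j s - θ i s)| ≤ κ := by
    intro s
    have h1 : |∑ j, Real.sin (θ j s - θ i s)| ≤ (N : ℝ) := by
      calc |∑ j : Fin N, Real.sin (θ j s - θ i s)| ≤ ∑ j : Fin N, |Real.sin (θ j s - θ i s)| :=
            Finset.abs_sum_le_sum_abs _ _
        _ ≤ ∑ _j : Fin N, (1 : ℝ) := by
            exact Finset.sum_le_sum fun j _ => abs_le.mpr ⟨Real.neg_one_le_sin _, Real.sin_le_one _⟩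
        _ = (N : ℝ) := by simp
    have hN0 : (0:ℝ) < N := by exact_mod_cast Nat.lt_of_lt_of_le Nat.zero_lt_one hN
    rw [abs_mul, abs_of_pos (div_pos hκ hN0)]
    calc κ / N * |∑ j, Real.sin (θ j s - θ i s)| ≤ κ / N * N := by
          exact mul_le_mul_of_nonneg_left h1 (le_of_lt (div_pos hκ hN0))
      _ = κ := by field_simp
  have hd1 : Differentiable ℝ (deriv (θ i)) :=
    ((contDiff_infty_iff_deriv.mp ((hsm i).of_le (by simp))).2).differentiable
      (by simp)
  set g : ℝ → ℝ := fun s => Real.exp (s / m) * (deriv (θ i) s - ν i) with hg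
  set B : ℝ → ℝ := fun s => |ω0 i - ν i| + κ * (Real.exp (s / m) - 1) with hB
  have hgd : ∀ s : ℝ, HasDerivAt g
      (Real.exp (s / m) * (1 / m) * (deriv (θ i) s - ν i)
        + Real.exp (s / m) * deriv (deriv (θ i)) s) s := by
    intro s
    have he : HasDerivAt (fun x : ℝ => Real.exp (x / m)) (Real.exp (s / m) * (1 / m)) s :=
      ((hasDerivAt_id s).div_const m).exp
    have hv : HasDerivAt (fun x : ℝ => deriv (θ i) x - ν i) (deriv (deriv (θ i)) s) s :=
      ((hd1 s).hasDerivAt).sub_const _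
    exact he.mul hv
  have hcont : ContinuousOn g (Icc (0:ℝ) t) :=
    fun x _ => (hgd x).continuousAt.continuousWithinAt
  have hder : ∀ x ∈ Ico (0:ℝ) t, HasDerivWithinAt g
      (Real.exp (x / m) / m * ((κ / N) * ∑ j, Real.sin (θ j x - θ i x))) (Ici x) x := by
    intro x hx
    have hode' := hode i x hx.1
    have heq : Real.exp (x / m) * (1 / m) * (deriv (θ i) x - ν i)
        + Real.exp (x / m) * deriv (deriv (θ i)) x
        = Real.exp (x / m) / m * ((κ / N) * ∑ j, Real.sin (θ j x - θ i x)) := by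
      have hdd : deriv (deriv (θ i)) x
          = ((κ / N) * ∑ j, Real.sin (θ j x - θ i x) - (deriv (θ i) x - ν i)) / m := by
        have hN0 : (0:ℝ) < N := by exact_mod_cast Nat.lt_of_lt_of_le Nat.zero_lt_one hN
        have h4 := congrArg (fun z => (N:ℝ) * z) hode'
        simp only [mul_add] at h4
        have h3 : (N:ℝ) * (κ / N * ∑ j, Real.sin (θ j x - θ i x))
            = κ * ∑ j, Real.sin (θ j x - θ i x) := by field_simp
        field_simp
        nlinarith [h4, h3]
      rw [hdd]; field_simp; ring
    exact heq ▸ (hgd x).hasDerivWithinAt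
  have ha : ‖g 0‖ ≤ B 0 := by simp [hg, hB, hiv i]
  have hBd : ∀ x : ℝ, HasDerivAt B (κ * (Real.exp (x / m) * (1 / m))) x := fun x =>
    (((((hasDerivAt_id x).div_const m).exp).sub_const 1).const_mul κ).const_add _
  have hbound : ∀ x ∈ Ico (0:ℝ) t,
      ‖Real.exp (x / m) / m * ((κ / N) * ∑ j, Real.sin (θ j x - θ i x))‖
        ≤ κ * (Real.exp (x / m) * (1 / m)) := by
    intro x hx
    rw [Real.norm_eq_abs, abs_mul, abs_of_pos (by positivity : (0:ℝ) < Real.exp (x/m) / m)]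
    calc Real.exp (x/m)/m * |(κ / N) * ∑ j, Real.sin (θ j x - θ i x)|
        ≤ Real.exp (x/m)/m * κ := mul_le_mul_of_nonneg_left (hS x) (by positivity)
      _ = κ * (Real.exp (x/m) * (1/m)) := by ring
  have hgb : ∀ x ∈ Icc (0:ℝ) t, ‖g x‖ ≤ B x := fun x hx =>
    image_norm_le_of_norm_deriv_right_le_deriv_boundary hcont hder ha hBd hbound hx
  have hgt := hgb t ⟨ht, le_refl t⟩
  rw [Real.norm_eq_abs, hg, hB] at hgt
  simp only [abs_mul, abs_of_pos (Real.exp_pos (t/m))] at hgt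
  have h1 : (1:ℝ) ≤ Real.exp (t / m) := Real.one_le_exp (by positivity)
  have h0 : (0:ℝ) ≤ |ω0 i - ν i| := abs_nonneg _
  nlinarith [Real.exp_pos (t/m)]

lemma sin_lip (a b : ℝ) : |Real.sin a - Real.sin b| ≤ |a - b| := by
  rw [Real.sin_sub_sin, abs_mul, abs_mul, abs_two]
  calc 2 * |Real.sin ((a - b) / 2)| * |Real.cos ((a + b) / 2)|
      ≤ 2 * |(a - b) / 2| * 1 :=
        mul_le_mul (mul_le_mul_of_nonneg_left Real.abs_sin_le_abs (by norm_num))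
          (Real.abs_cos_le_one _) (abs_nonneg _) (by positivity)
    _ = |a - b| := by rw [abs_div, abs_two]; ring

/-- Theorem 1.4 (1): `C⁰` quantitative Tikhonov bound for the zero inertia limit. -/
theorem stmt1 (N : ℕ) (hN : 1 ≤ N) (θ0 ω0 ν : Fin N → ℝ) (κ m : ℝ)
    (hκ : 0 < κ) (hm : 0 < m)
    (θm θz : Fin N → ℝ → ℝ)
    (hθm : IsInertialSol N m κ ν θ0 ω0 θm)
    (hθz : IsFirstOrderSol N κ ν θ0 θz) :
    ∀ i, ∀ t : ℝ, 0 ≤ t →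
      |θm i t - θz i t| ≤
        m * (2 * (⨆ j, |ω0 j - ν j|) + κ) * Real.exp (2 * κ * t) := by
  have hNpos : 0 < N := hN
  have : Nonempty (Fin N) := ⟨⟨0, hNpos⟩⟩
  have hN0 : (0:ℝ) < N := by exact_mod_cast hNpos
  set M : ℝ := ⨆ j, |ω0 j - ν j| with hM
  have hMle : ∀ j, |ω0 j - ν j| ≤ M :=
    fun j => le_ciSup (f := fun j => |ω0 j - ν j|) (Set.Finite.bddAbove (Set.finite_range _)) j
  set C : ℝ := 2 * M + κ with hC
  have hMnn : 0 ≤ M := le_trans (abs_nonneg _) (hMle (Classical.arbitrary _))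
  have hCpos : 0 < C := by positivity
  obtain ⟨hsm, hm0, hmv, hmode⟩ := hθm
  obtain ⟨hsz, hz0, hzode⟩ := hθz
  -- velocity bound
  have hvel : ∀ (j : Fin N) (s : ℝ), 0 ≤ s → |deriv (θm j) s - ω0 j| ≤ C := by
    intro j s hs
    have h1 := vel_bound N m κ ν θ0 ω0 θm hκ hm hN ⟨hsm, hm0, hmv, hmode⟩ j s hs
    have h2 : |deriv (θm j) s - ω0 j|
        ≤ |deriv (θm j) s - ν j| + |ω0 j - ν j| := by
      have := abs_sub (deriv (θm j) s - ν j) (ω0 j - ν j)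
      calc |deriv (θm j) s - ω0 j| = |(deriv (θm j) s - ν j) - (ω0 j - ν j)| := by ring_nf
        _ ≤ |deriv (θm j) s - ν j| + |ω0 j - ν j| := abs_sub _ _
    have := hMle j
    rw [hC]; linarith
  -- differentiability facts
  have hdm : ∀ j, Differentiable ℝ (θm j) := fun j => (hsm j).differentiable (by simp)
  have hdz : ∀ j, Differentiable ℝ (θz j) := fun j => (hsz j).differentiable (by simp)
  have hdm1 : ∀ j, Differentiable ℝ (deriv (θm j)) := fun j =>
    ((contDiff_infty_iff_deriv.mp ((hsm j).of_le (by simp))).2).differentiable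
      (by simp)
  set Ψ : ℝ → (Fin N → ℝ) :=
    fun s j => (θm j s - θz j s) + m * (deriv (θm j) s - ω0 j) with hΨ
  set Ψ' : ℝ → (Fin N → ℝ) :=
    fun s j => (κ / N) * ∑ k, Real.sin (θm k s - θm j s)
      - (κ / N) * ∑ k, Real.sin (θz k s - θz j s) with hΨ'
  intro i t ht
  have hcont : ContinuousOn Ψ (Icc 0 t) := by
    apply Continuous.continuousOn
    apply continuous_pi
    intro j
    exact ((hdm j).continuous.sub (hdz j).continuous).add
      (continuous_const.mul (((hdm1 j).continuous).sub continuous_const))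
  have hder : ∀ s ∈ Ico (0:ℝ) t, HasDerivWithinAt Ψ (Ψ' s) (Ici s) s := by
    intro s hs
    apply HasDerivAt.hasDerivWithinAt
    rw [hasDerivAt_pi]
    intro j
    have hcomp : HasDerivAt (fun x => Ψ x j)
        (deriv (θm j) s - deriv (θz j) s + m * deriv (deriv (θm j)) s) s := by
      have h1 : HasDerivAt (fun x => θm j x - θz j x)
          (deriv (θm j) s - deriv (θz j) s) s :=
        ((hdm j s).hasDerivAt).sub ((hdz j s).hasDerivAt)
      have h2 : HasDerivAt (fun x => m * (deriv (θm j) x - ω0 j))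
          (m * deriv (deriv (θm j)) s) s :=
        (((hdm1 j s).hasDerivAt).sub_const _).const_mul m
      exact h1.add h2
    have heq : deriv (θm j) s - deriv (θz j) s + m * deriv (deriv (θm j)) s = Ψ' s j := by
      have e1 := hmode j s hs.1
      have e2 := hzode j s hs.1
      simp only [hΨ']
      linarith
    exact heq ▸ hcomp
  have ha : ‖Ψ 0‖ ≤ 0 := by
    have : Ψ 0 = 0 := by
      funext j
      simp [hΨ, hm0 j, hz0 j, hmv j]
    simp [this]
  have hbound : ∀ s ∈ Ico (0:ℝ) t, ‖Ψ' s‖ ≤ (2*κ) * ‖Ψ s‖ + 2*κ*(m*C) := by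
    intro s hs
    have hrhs : 0 ≤ (2*κ) * ‖Ψ s‖ + 2*κ*(m*C) := by positivity
    rw [pi_norm_le_iff_of_nonneg hrhs]
    intro j
    -- pointwise phase bound
    have hphase : ∀ k : Fin N, |θm k s - θz k s| ≤ ‖Ψ s‖ + m * C := by
      intro k
      have h1 : |Ψ s k| ≤ ‖Ψ s‖ := norm_le_pi_norm (Ψ s) k
      have h2 := hvel k s hs.1
      have h3 : |θm k s - θz k s| ≤ |Ψ s k| + m * |deriv (θm k) s - ω0 k| := by
        have : θm k s - θz k s = Ψ s k - m * (deriv (θm k) s - ω0 k) := by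
          simp [hΨ]
        rw [this]
        calc |Ψ s k - m * (deriv (θm k) s - ω0 k)|
            ≤ |Ψ s k| + |m * (deriv (θm k) s - ω0 k)| := abs_sub _ _
          _ = |Ψ s k| + m * |deriv (θm k) s - ω0 k| := by
              rw [abs_mul, abs_of_pos hm]
      have h4 : m * |deriv (θm k) s - ω0 k| ≤ m * C :=
        mul_le_mul_of_nonneg_left h2 hm.le
      linarith
    have hterm : ∀ k : Fin N,
        |Real.sin (θm k s - θm j s) - Real.sin (θz k s - θz j s)|
          ≤ 2 * (‖Ψ s‖ + m * C) := by
      intro k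
      have hlip : |Real.sin (θm k s - θm j s) - Real.sin (θz k s - θz j s)|
          ≤ |(θm k s - θm j s) - (θz k s - θz j s)| := sin_lip _ _
      have htri : |(θm k s - θm j s) - (θz k s - θz j s)|
          ≤ |θm k s - θz k s| + |θm j s - θz j s| := by
        have : (θm k s - θm j s) - (θz k s - θz j s)
            = (θm k s - θz k s) - (θm j s - θz j s) := by ring
        rw [this]; exact abs_sub _ _
      have := hphase k
      have := hphase j
      linarith
    have hsum : |∑ k, Real.sin (θm k s - θm j s) - ∑ k, Real.sin (θz k s - θz j s)|
        ≤ N * (2 * (‖Ψ s‖ + m * C)) := by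
      rw [← Finset.sum_sub_distrib]
      calc |∑ k : Fin N, (Real.sin (θm k s - θm j s) - Real.sin (θz k s - θz j s))|
          ≤ ∑ k : Fin N, |Real.sin (θm k s - θm j s) - Real.sin (θz k s - θz j s)| :=
            Finset.abs_sum_le_sum_abs _ _
        _ ≤ ∑ _k : Fin N, 2 * (‖Ψ s‖ + m * C) := Finset.sum_le_sum fun k _ => hterm k
        _ = N * (2 * (‖Ψ s‖ + m * C)) := by simp [Finset.sum_const]
    have : ‖Ψ' s j‖ = (κ/N) * |∑ k, Real.sin (θm k s - θm j s)
        - ∑ k, Real.sin (θz k s - θz j s)| := by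
      rw [Real.norm_eq_abs]
      simp only [hΨ']
      rw [← mul_sub, abs_mul, abs_of_pos (div_pos hκ hN0)]
    rw [this]
    calc (κ/N) * |∑ k, Real.sin (θm k s - θm j s) - ∑ k, Real.sin (θz k s - θz j s)|
        ≤ (κ/N) * (N * (2 * (‖Ψ s‖ + m * C))) :=
          mul_le_mul_of_nonneg_left hsum (div_pos hκ hN0).le
      _ = 2*κ*(‖Ψ s‖ + m * C) := by field_simp
      _ = (2*κ) * ‖Ψ s‖ + 2*κ*(m*C) := by ring
  have hgr := norm_le_gronwallBound_of_norm_deriv_right_le hcont hder ha hbound t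
    ⟨ht, le_refl t⟩
  have h2κ : (2*κ) ≠ 0 := by positivity
  rw [gronwallBound_of_K_ne_0 h2κ] at hgr
  simp only [sub_zero, zero_mul, zero_add] at hgr
  have hgr' : ‖Ψ t‖ ≤ m * C * (Real.exp (2*κ*t) - 1) := by
    have : 2*κ*(m*C) / (2*κ) = m * C := by field_simp
    rw [this] at hgr
    linarith [hgr]
  -- conclude
  have h1 : |Ψ t i| ≤ ‖Ψ t‖ := norm_le_pi_norm (Ψ t) i
  have h2 := hvel i t ht
  have h3 : |θm i t - θz i t| ≤ |Ψ t i| + m * C := by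
    have he : θm i t - θz i t = Ψ t i - m * (deriv (θm i) t - ω0 i) := by
      simp [hΨ]
    rw [he]
    calc |Ψ t i - m * (deriv (θm i) t - ω0 i)|
        ≤ |Ψ t i| + |m * (deriv (θm i) t - ω0 i)| := abs_sub _ _
      _ ≤ |Ψ t i| + m * C := by
          rw [abs_mul, abs_of_pos hm]
          linarith [mul_le_mul_of_nonneg_left h2 hm.le]
    
  have hexp : (1:ℝ) ≤ Real.exp (2*κ*t) := Real.one_le_exp (by positivity)
  calc |θm i t - θz i t| ≤ |Ψ t i| + m * C := h3
    _ ≤ m * C * (Real.exp (2*κ*t) - 1) + m * C := by linarith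
    _ = m * C * Real.exp (2*κ*t) := by ring
end
end

section
/- Fix N ≥ 1, initial data θ₁⁰,…,θ_N⁰, ω₁⁰,…,ω_N⁰ ∈ ℝ, natural frequencies ν₁,…,ν_N ∈ ℝ, and κ > 0. For m > 0 let θᵢ(m,t) denote the solution of the inertial Kuramoto model with these data, and let θᵢ(0,t) denote the solution of the first-order Kuramoto model with initial data θ₁⁰,…,θ_N⁰. Then for every i ∈ {1,…,N}: (i) for every T > 0, lim_{m→0⁺} sup_{t∈[0,T]} |θᵢ(m,t) − θᵢ(0,t)| = 0; and (ii) for every 0 < T₁ < T₂, lim_{m→0⁺} sup_{t∈[T₁,T₂]} |θ̇ᵢ(m,t) − θ̇ᵢ(0,t)| = 0. -/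
open Filter Topology MeasureTheory intervalIntegral

noncomputable section

namespace Stmt3Aux


/-- The Kuramoto vector field, `i`-th component. -/
def Fk (N : ℕ) (κ : ℝ) (ν : Fin N → ℝ) (i : Fin N) (x : Fin N → ℝ) : ℝ :=
  ν i + κ / N * ∑ j, Real.sin (x j - x i)

lemma abs_sin_sub_sin (a b : ℝ) : |Real.sin a - Real.sin b| ≤ |a - b| := by
  rw [Real.sin_sub_sin]
  calc |2 * Real.sin ((a - b) / 2) * Real.cos ((a + b) / 2)|
      = 2 * |Real.sin ((a - b) / 2)| * |Real.cos ((a + b) / 2)| := by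
        rw [abs_mul, abs_mul]; norm_num
    _ ≤ 2 * |(a - b) / 2| * 1 :=
        mul_le_mul (by have := Real.abs_sin_le_abs (x := (a-b)/2); nlinarith)
          (Real.abs_cos_le_one _) (abs_nonneg _) (by positivity)
    _ = |a - b| := by rw [abs_div]; norm_num; ring

lemma abs_Fk_le {N : ℕ} (hN : 1 ≤ N) {κ : ℝ} (hκ : 0 ≤ κ) (ν : Fin N → ℝ) (i : Fin N)
    (x : Fin N → ℝ) : |Fk N κ ν i x| ≤ |ν i| + κ := by
  have hNpos : (0:ℝ) < N := by exact_mod_cast hN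
  have h1 : |∑ j, Real.sin (x j - x i)| ≤ (N : ℝ) := by
    calc |∑ j, Real.sin (x j - x i)| ≤ ∑ j : Fin N, |Real.sin (x j - x i)| :=
          Finset.abs_sum_le_sum_abs _ _
      _ ≤ ∑ _j : Fin N, (1:ℝ) := by
          apply Finset.sum_le_sum; intro j _; exact Real.abs_sin_le_one _
      _ = (N : ℝ) := by simp
  calc |Fk N κ ν i x| ≤ |ν i| + |κ / N * ∑ j, Real.sin (x j - x i)| := abs_add_le _ _
    _ ≤ |ν i| + κ / N * N := by
        gcongr
        rw [abs_mul, abs_of_nonneg (by positivity : (0:ℝ) ≤ κ / N)]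
        gcongr
    _ = |ν i| + κ := by field_simp

lemma abs_Fk_sub_Fk_le {N : ℕ} (hN : 1 ≤ N) {κ : ℝ} (hκ : 0 ≤ κ) (ν : Fin N → ℝ)
    (i : Fin N) (x y : Fin N → ℝ) {d : ℝ} (hd : 0 ≤ d) (hxy : ∀ j, |x j - y j| ≤ d) :
    |Fk N κ ν i x - Fk N κ ν i y| ≤ 2 * κ * d := by
  have hNpos : (0:ℝ) < N := by exact_mod_cast hN
  have h1 : |∑ j, Real.sin (x j - x i) - ∑ j, Real.sin (y j - y i)| ≤ (N : ℝ) * (2 * d) := by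
    rw [← Finset.sum_sub_distrib]
    calc |∑ j, (Real.sin (x j - x i) - Real.sin (y j - y i))|
        ≤ ∑ j : Fin N, |Real.sin (x j - x i) - Real.sin (y j - y i)| :=
          Finset.abs_sum_le_sum_abs _ _
      _ ≤ ∑ _j : Fin N, (2 * d) := by
          apply Finset.sum_le_sum; intro j _
          calc |Real.sin (x j - x i) - Real.sin (y j - y i)| ≤ |x j - x i - (y j - y i)| :=
                abs_sin_sub_sin _ _
            _ = |(x j - y j) - (x i - y i)| := by ring_nf
            _ ≤ |x j - y j| + |x i - y i| := abs_sub _ _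
            _ ≤ d + d := add_le_add (hxy j) (hxy i)
            _ = 2 * d := by ring
      _ = (N : ℝ) * (2 * d) := by simp [mul_comm]
  have : Fk N κ ν i x - Fk N κ ν i y
      = κ / N * (∑ j, Real.sin (x j - x i) - ∑ j, Real.sin (y j - y i)) := by
    rw [Fk, Fk]; ring
  rw [this, abs_mul, abs_of_nonneg (by positivity : (0:ℝ) ≤ κ / N)]
  calc κ / N * |∑ j, Real.sin (x j - x i) - ∑ j, Real.sin (y j - y i)|
      ≤ κ / N * ((N : ℝ) * (2 * d)) := by gcongr
    _ = 2 * κ * d := by field_simp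

lemma abs_kursum_le {N : ℕ} (hN : 1 ≤ N) {κ : ℝ} (hκ : 0 ≤ κ) (x v : Fin N → ℝ)
    {W : ℝ} (hv : ∀ j, |v j| ≤ W) (i : Fin N) :
    |κ / N * ∑ j, Real.cos (x j - x i) * (v j - v i)| ≤ 2 * κ * W := by
  have hNpos : (0:ℝ) < N := by exact_mod_cast hN
  have hW0 : 0 ≤ W := le_trans (abs_nonneg _) (hv i)
  have h1 : |∑ j, Real.cos (x j - x i) * (v j - v i)| ≤ (N : ℝ) * (2 * W) := by
    calc |∑ j, Real.cos (x j - x i) * (v j - v i)|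
        ≤ ∑ j : Fin N, |Real.cos (x j - x i) * (v j - v i)| := Finset.abs_sum_le_sum_abs _ _
      _ ≤ ∑ _j : Fin N, (2 * W) := by
          apply Finset.sum_le_sum; intro j _
          rw [abs_mul]
          calc |Real.cos (x j - x i)| * |v j - v i| ≤ 1 * (|v j| + |v i|) :=
                mul_le_mul (Real.abs_cos_le_one _) (abs_sub _ _) (abs_nonneg _) zero_le_one
            _ ≤ 1 * (W + W) := by gcongr; exacts [hv j, hv i]
            _ = 2 * W := by ring
      _ = (N : ℝ) * (2 * W) := by simp [mul_comm]
  rw [abs_mul, abs_of_nonneg (by positivity : (0:ℝ) ≤ κ / N)]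
  calc κ / N * |∑ j, Real.cos (x j - x i) * (v j - v i)| ≤ κ / N * ((N : ℝ) * (2 * W)) := by gcongr
    _ = 2 * κ * W := by field_simp

/-- derivative of `t ↦ Fk i (θ · t)` -/
lemma hasDerivAt_Fk {N : ℕ} (κ : ℝ) (ν : Fin N → ℝ) (θ : Fin N → ℝ → ℝ)
    (hθ : ∀ j, Differentiable ℝ (θ j)) (i : Fin N) (t : ℝ) :
    HasDerivAt (fun s => Fk N κ ν i (fun j => θ j s))
      (κ / N * ∑ j, Real.cos (θ j t - θ i t) * (deriv (θ j) t - deriv (θ i) t)) t := by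
  have h1 : ∀ j : Fin N, HasDerivAt (fun s => Real.sin (θ j s - θ i s))
      (Real.cos (θ j t - θ i t) * (deriv (θ j) t - deriv (θ i) t)) t := fun j =>
    (((hθ j t).hasDerivAt).sub ((hθ i t).hasDerivAt)).sin
  have h2 : HasDerivAt (fun s => ∑ j, Real.sin (θ j s - θ i s))
      (∑ j, Real.cos (θ j t - θ i t) * (deriv (θ j) t - deriv (θ i) t)) t :=
    HasDerivAt.fun_sum (fun j _ => h1 j)
  exact (h2.const_mul (κ / N)).const_add (ν i)


/-- boundary layer function -/
def hb (N : ℕ) (κ : ℝ) (ν : Fin N → ℝ) (θm : Fin N → ℝ → ℝ) (j : Fin N) (s : ℝ) : ℝ :=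
  deriv (θm j) s - Fk N κ ν j (fun l => θm l s)

lemma key {N : ℕ} (hN : 1 ≤ N) (θ0 ω0 ν : Fin N → ℝ) {κ : ℝ} (hκ : 0 < κ)
    (θz : Fin N → ℝ → ℝ) (hθz : IsFirstOrderSol N κ ν θ0 θz)
    {W : ℝ} (hW : ∀ i, |ω0 i| + |ν i| + κ ≤ W)
    {m : ℝ} (hm : 0 < m) (θm : Fin N → ℝ → ℝ) (hθm : IsInertialSol N m κ ν θ0 ω0 θm)
    {T : ℝ} (hT : 0 < T) :
    ∀ t ∈ Set.Icc (0:ℝ) T, ∀ i,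
      |θm i t - θz i t| ≤ m * (4 * W * Real.exp (2 * κ * T)) ∧
      |deriv (θm i) t - deriv (θz i) t| ≤
        Real.exp (-(t / m)) * W + m * (2 * κ * W + 8 * κ * W * Real.exp (2 * κ * T)) := by
  obtain ⟨hsm, hinit, hvel0, hode0⟩ := hθm
  obtain ⟨hsz, hinitz, hodez0⟩ := hθz
  haveI : Nonempty (Fin N) := Fin.pos_iff_nonempty.mp hN
  have hm' : m ≠ 0 := ne_of_gt hm
  -- restate ODEs via Fk
  have hode : ∀ i, ∀ s : ℝ, 0 ≤ s →
      m * deriv (deriv (θm i)) s + deriv (θm i) s = Fk N κ ν i (fun j => θm j s) := by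
    intro i s hs; rw [Fk]; exact hode0 i s hs
  have hodez : ∀ i, ∀ s : ℝ, 0 ≤ s →
      deriv (θz i) s = Fk N κ ν i (fun j => θz j s) := by
    intro i s hs; rw [Fk]; exact hodez0 i s hs
  -- differentiability facts
  have hdm : ∀ j, Differentiable ℝ (θm j) := fun j => (hsm j).differentiable (by simp)
  have hdm' : ∀ j, Differentiable ℝ (deriv (θm j)) := fun j =>
    ((contDiff_infty_iff_deriv.mp ((hsm j).of_le (by simp))).2).differentiable (by simp)
  have hdz : ∀ j, Differentiable ℝ (θz j) := fun j => (hsz j).differentiable (by simp)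
  have hW0 : 0 < W := lt_of_lt_of_le (by positivity) (hW (Classical.arbitrary _))
  -- Step 1 : velocity bound
  have velb : ∀ i, ∀ t : ℝ, 0 ≤ t → |deriv (θm i) t| ≤ W := by
    intro i t ht
    set Bi := |ν i| + κ with hBidef
    have hBi0 : 0 < Bi := by positivity
    have main : ∀ ⦃x⦄, x ∈ Set.Icc (0:ℝ) t →
        ‖Real.exp (x / m) * deriv (θm i) x - deriv (θm i) 0‖ ≤ Bi * (Real.exp (x / m) - 1) := by
      apply image_norm_le_of_norm_deriv_right_le_deriv_boundary
        (f := fun x => Real.exp (x / m) * deriv (θm i) x - deriv (θm i) 0)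
        (f' := fun s => Real.exp (s / m) / m * (Fk N κ ν i fun j => θm j s))
        (B := fun s => Bi * (Real.exp (s / m) - 1))
        (B' := fun s => Bi / m * Real.exp (s / m))
      · apply Continuous.continuousOn
        exact ((Real.continuous_exp.comp (continuous_id.div_const m)).mul
          (hdm' i).continuous).sub continuous_const
      · intro s hs
        have he : HasDerivAt (fun s : ℝ => Real.exp (s / m)) (Real.exp (s / m) * (1 / m)) s :=
          ((hasDerivAt_id s).div_const m).exp
        have hω : HasDerivAt (deriv (θm i)) (deriv (deriv (θm i)) s) s := (hdm' i s).hasDerivAt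
        have hh := (he.mul hω).sub_const (deriv (θm i) 0)
        have heq : Real.exp (s / m) * (1 / m) * deriv (θm i) s
            + Real.exp (s / m) * deriv (deriv (θm i)) s
            = Real.exp (s / m) / m * (Fk N κ ν i fun j => θm j s) := by
          have h2 := hode i s hs.1
          have h4 : deriv (deriv (θm i)) s
              = (Fk N κ ν i (fun j => θm j s) - deriv (θm i) s) / m := by
            rw [eq_div_iff hm']; linarith
          rw [h4]
          field_simp
          try ring
        rw [heq] at hh
        exact hh.hasDerivWithinAt
      · simp
      · intro s
        have : HasDerivAt (fun s : ℝ => Bi * (Real.exp (s / m) - 1))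
            (Bi * (Real.exp (s / m) * (1 / m))) s :=
          ((((hasDerivAt_id s).div_const m).exp).sub_const 1).const_mul Bi
        convert this using 1
        field_simp
        try ring
      · intro s hs
        rw [Real.norm_eq_abs, abs_mul, abs_of_nonneg (by positivity : (0:ℝ) ≤ Real.exp (s/m) / m)]
        calc Real.exp (s / m) / m * |Fk N κ ν i fun j => θm j s|
            ≤ Real.exp (s / m) / m * Bi := by
              gcongr; exact abs_Fk_le hN hκ.le ν i _
          _ = Bi / m * Real.exp (s / m) := by ring
    have h1 := main (Set.right_mem_Icc.mpr ht)
    rw [Real.norm_eq_abs, hvel0 i] at h1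
    have h2 : Real.exp (t / m) * |deriv (θm i) t| ≤ |ω0 i| + Bi * (Real.exp (t / m) - 1) := by
      have := abs_sub_abs_le_abs_sub (Real.exp (t / m) * deriv (θm i) t) (ω0 i)
      rw [abs_mul, abs_of_pos (Real.exp_pos _)] at this
      linarith [this.trans h1]
    have hexp1 : 1 ≤ Real.exp (t / m) := Real.one_le_exp (by positivity)
    nlinarith [Real.exp_pos (t / m), hW i, abs_nonneg (ω0 i), abs_nonneg (deriv (θm i) t)]
  -- Step 2 : boundary layer bound
  have hb0 : ∀ j, |hb N κ ν θm j 0| ≤ W := by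
    intro j
    have : (fun l => θm l 0) = θ0 := funext fun l => hinit l
    rw [hb, hvel0 j, this]
    calc |ω0 j - Fk N κ ν j θ0| ≤ |ω0 j| + |Fk N κ ν j θ0| := abs_sub _ _
      _ ≤ |ω0 j| + (|ν j| + κ) := by gcongr; exact abs_Fk_le hN hκ.le ν j _
      _ ≤ W := by linarith [hW j]
  have hbbound : ∀ i, ∀ t : ℝ, 0 ≤ t →
      |hb N κ ν θm i t - Real.exp (-(t / m)) * hb N κ ν θm i 0| ≤ 2 * κ * W * m := by
    intro i t ht
    have main : ∀ ⦃x⦄, x ∈ Set.Icc (0:ℝ) t →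
        ‖Real.exp (x / m) * hb N κ ν θm i x - hb N κ ν θm i 0‖
          ≤ 2 * κ * W * m * (Real.exp (x / m) - 1) := by
      apply image_norm_le_of_norm_deriv_right_le_deriv_boundary
        (f := fun x => Real.exp (x / m) * hb N κ ν θm i x - hb N κ ν θm i 0)
        (f' := fun s => -(Real.exp (s / m) *
          (κ / N * ∑ j, Real.cos (θm j s - θm i s) * (deriv (θm j) s - deriv (θm i) s))))
        (B := fun s => 2 * κ * W * m * (Real.exp (s / m) - 1))
        (B' := fun s => 2 * κ * W * Real.exp (s / m))
      · apply Continuous.continuousOn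
        apply Continuous.sub _ continuous_const
        apply (Real.continuous_exp.comp (continuous_id.div_const m)).mul
        apply Continuous.sub (hdm' i).continuous
        unfold Fk
        apply continuous_const.add
        apply Continuous.mul continuous_const
        exact continuous_finset_sum _ fun j _ =>
          (Real.continuous_sin.comp ((hdm j).continuous.sub (hdm i).continuous))
      · intro s hs
        have he : HasDerivAt (fun s : ℝ => Real.exp (s / m)) (Real.exp (s / m) * (1 / m)) s :=
          ((hasDerivAt_id s).div_const m).exp
        have hω : HasDerivAt (deriv (θm i)) (deriv (deriv (θm i)) s) s := (hdm' i s).hasDerivAt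
        have hF := hasDerivAt_Fk κ ν θm hdm i s
        have hh := ((he.fun_mul (hω.fun_sub hF)).sub_const (hb N κ ν θm i 0))
        set G := κ / (N:ℝ) * ∑ j, Real.cos (θm j s - θm i s) * (deriv (θm j) s - deriv (θm i) s)
          with hGdef
        have heq : Real.exp (s / m) * (1 / m) * (deriv (θm i) s - Fk N κ ν i fun j => θm j s)
            + Real.exp (s / m) * (deriv (deriv (θm i)) s - G)
            = -(Real.exp (s / m) * G) := by
          have h2 := hode i s hs.1
          have h4 : deriv (deriv (θm i)) s
              = (Fk N κ ν i (fun j => θm j s) - deriv (θm i) s) / m := by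
            rw [eq_div_iff hm']; linarith
          rw [h4]
          field_simp
          try ring
        rw [heq] at hh
        have : (fun s => Real.exp (s / m) * (deriv (θm i) s - Fk N κ ν i fun j => θm j s)
            - hb N κ ν θm i 0) = fun s => Real.exp (s / m) * hb N κ ν θm i s
            - hb N κ ν θm i 0 := by
          funext s; simp only [hb]
        rw [this] at hh
        exact hh.hasDerivWithinAt
      · simp
      · intro s
        have : HasDerivAt (fun s : ℝ => 2 * κ * W * m * (Real.exp (s / m) - 1))
            (2 * κ * W * m * (Real.exp (s / m) * (1 / m))) s :=
          ((((hasDerivAt_id s).div_const m).exp).sub_const 1).const_mul (2 * κ * W * m)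
        convert this using 1
        field_simp
        try ring
      · intro s hs
        rw [Real.norm_eq_abs, abs_neg, abs_mul, abs_of_pos (Real.exp_pos _)]
        calc Real.exp (s / m) *
            |κ / N * ∑ j, Real.cos (θm j s - θm i s) * (deriv (θm j) s - deriv (θm i) s)|
            ≤ Real.exp (s / m) * (2 * κ * W) := by
              gcongr
              exact abs_kursum_le hN hκ.le _ _ (fun j => velb j s hs.1) i
          _ = 2 * κ * W * Real.exp (s / m) := by ring
    have h1 := main (Set.right_mem_Icc.mpr ht)
    rw [Real.norm_eq_abs] at h1
    have hE : Real.exp (-(t / m)) = (Real.exp (t / m))⁻¹ := by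
      rw [← Real.exp_neg]
    have hEpos := Real.exp_pos (t / m)
    have heq : hb N κ ν θm i t - Real.exp (-(t / m)) * hb N κ ν θm i 0
        = (Real.exp (t / m))⁻¹ * (Real.exp (t / m) * hb N κ ν θm i t - hb N κ ν θm i 0) := by
      rw [hE]; field_simp
    rw [heq, abs_mul, abs_of_pos (by positivity : (0:ℝ) < (Real.exp (t / m))⁻¹)]
    have hexp1 : 1 ≤ Real.exp (t / m) := Real.one_le_exp (by positivity)
    calc (Real.exp (t / m))⁻¹ * |Real.exp (t / m) * hb N κ ν θm i t - hb N κ ν θm i 0|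
        ≤ (Real.exp (t / m))⁻¹ * (2 * κ * W * m * (Real.exp (t / m) - 1)) := by gcongr
      _ ≤ 2 * κ * W * m := by
          rw [inv_mul_le_iff₀ hEpos]
          have hc : 0 < 2 * κ * W * m := by positivity
          nlinarith [hc]
  -- Step 3 : Gronwall for positions
  intro t htT i
  set E : ℝ := Real.exp (2 * κ * T) with hEdef
  have hE1 : 1 ≤ E := Real.one_le_exp (by positivity)
  have posb : ∀ j, |θm j t - θz j t| ≤ m * (4 * W * E) := by
    set g : ℝ → (Fin N → ℝ) :=
      fun s j => (θm j s - θz j s) + m * Real.exp (-(s / m)) * hb N κ ν θm j 0 with hgdef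
    have hgt : ∀ x ∈ Set.Icc (0:ℝ) T, ‖g x‖ ≤
        gronwallBound (m * W) (2 * κ) (4 * κ * W * m) (x - 0) := by
      apply norm_le_gronwallBound_of_norm_deriv_right_le
        (f' := fun s j => (hb N κ ν θm j s - Real.exp (-(s / m)) * hb N κ ν θm j 0)
          + (Fk N κ ν j (fun l => θm l s) - Fk N κ ν j (fun l => θz l s)))
      · apply Continuous.continuousOn
        apply continuous_pi
        intro j
        exact ((hdm j).continuous.sub (hdz j).continuous).add
          ((continuous_const.mul (Real.continuous_exp.comp
            ((continuous_id.div_const m).neg))).mul continuous_const)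
      · intro s hs
        apply HasDerivAt.hasDerivWithinAt
        apply hasDerivAt_pi.mpr
        intro j
        have hexp : HasDerivAt (fun s : ℝ => Real.exp (-(s / m)))
            (Real.exp (-(s / m)) * -(1 / m)) s := (((hasDerivAt_id s).div_const m).neg).exp
        have hcomp := (((hdm j s).hasDerivAt.fun_sub (hdz j s).hasDerivAt).fun_add
          ((hexp.const_mul m).mul_const (hb N κ ν θm j 0)))
        convert hcomp using 1
        have e1 : deriv (θz j) s = Fk N κ ν j (fun l => θz l s) := hodez j s hs.1
        rw [hb, e1]
        field_simp
        ring
      · have : ∀ j, g 0 j = m * hb N κ ν θm j 0 := by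
          intro j
          simp only [hgdef, hinit, hinitz]
          simp [Real.exp_zero]
        apply (pi_norm_le_iff_of_nonneg (mul_nonneg hm.le hW0.le)).mpr
        intro j
        rw [this j, Real.norm_eq_abs, abs_mul, abs_of_pos hm]
        exact mul_le_mul_of_nonneg_left (hb0 j) hm.le
      · intro s hs
        have hnn : (0:ℝ) ≤ 2 * κ * ‖g s‖ + 4 * κ * W * m := by
          have h1 : (0:ℝ) ≤ 2 * κ * ‖g s‖ :=
            mul_nonneg (by linarith) (norm_nonneg _)
          nlinarith [mul_pos (mul_pos hκ hW0) hm]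
        apply (pi_norm_le_iff_of_nonneg hnn).mpr
        intro j
        rw [Real.norm_eq_abs]
        have hd : ∀ l, |θm l s - θz l s| ≤ ‖g s‖ + m * W := by
          intro l
          have h1 : θm l s - θz l s = g s l - m * Real.exp (-(s / m)) * hb N κ ν θm l 0 := by
            simp [hgdef]
          rw [h1]
          have h2 : |g s l| ≤ ‖g s‖ := by
            rw [← Real.norm_eq_abs]; exact norm_le_pi_norm (g s) l
          have hle1 : Real.exp (-(s / m)) ≤ 1 := Real.exp_le_one_iff.mpr (by
            simp only [neg_nonpos]
            exact div_nonneg hs.1 hm.le)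
          calc |g s l - m * Real.exp (-(s / m)) * hb N κ ν θm l 0|
              ≤ |g s l| + |m * Real.exp (-(s / m)) * hb N κ ν θm l 0| := abs_sub _ _
            _ ≤ ‖g s‖ + m * W := by
                apply add_le_add h2
                rw [abs_mul, abs_mul, abs_of_pos hm, abs_of_pos (Real.exp_pos _)]
                calc m * Real.exp (-(s / m)) * |hb N κ ν θm l 0| ≤ m * 1 * W := by
                      apply mul_le_mul _ (hb0 l) (abs_nonneg _) (by positivity)
                      apply mul_le_mul_of_nonneg_left hle1 hm.le
                  _ = m * W := by ring
        calc |hb N κ ν θm j s - Real.exp (-(s / m)) * hb N κ ν θm j 0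
              + (Fk N κ ν j (fun l => θm l s) - Fk N κ ν j (fun l => θz l s))|
            ≤ |hb N κ ν θm j s - Real.exp (-(s / m)) * hb N κ ν θm j 0|
              + |Fk N κ ν j (fun l => θm l s) - Fk N κ ν j (fun l => θz l s)| := abs_add_le _ _
          _ ≤ 2 * κ * W * m + 2 * κ * (‖g s‖ + m * W) := by
              apply add_le_add (hbbound j s hs.1)
              exact abs_Fk_sub_Fk_le hN hκ.le ν j _ _ (by positivity) hd
          _ = 2 * κ * ‖g s‖ + 4 * κ * W * m := by ring
    have hgb := hgt t htT
    rw [gronwallBound_of_K_ne_0 (by positivity : 2 * κ ≠ 0)] at hgb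
    have hexpKt : Real.exp (2 * κ * (t - 0)) ≤ E := by
      rw [hEdef]
      apply Real.exp_le_exp.mpr
      have := htT.2
      nlinarith
    have hg_small : ‖g t‖ ≤ 3 * m * W * E := by
      have h5 : 4 * κ * W * m / (2 * κ) = 2 * W * m := by field_simp; ring
      rw [h5] at hgb
      have hgb2 : ‖g t‖ ≤ m * W * Real.exp (2 * κ * (t - 0))
          + 2 * W * m * (Real.exp (2 * κ * (t - 0)) - 1) := by simpa using hgb
      have hEt0 : (0:ℝ) < Real.exp (2 * κ * (t - 0)) := Real.exp_pos _
      nlinarith [hgb2, mul_le_mul_of_nonneg_left hexpKt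
        (by positivity : (0:ℝ) ≤ 3 * m * W), mul_pos hm hW0]
    intro j
    have h1 : θm j t - θz j t = g t j - m * Real.exp (-(t / m)) * hb N κ ν θm j 0 := by
      simp [hgdef]
    have h2 : |g t j| ≤ ‖g t‖ := by
      rw [← Real.norm_eq_abs]; exact norm_le_pi_norm (g t) j
    have hle1 : Real.exp (-(t / m)) ≤ 1 := Real.exp_le_one_iff.mpr (by
      simp only [neg_nonpos]
      exact div_nonneg htT.1 hm.le)
    rw [h1]
    calc |g t j - m * Real.exp (-(t / m)) * hb N κ ν θm j 0|
        ≤ |g t j| + |m * Real.exp (-(t / m)) * hb N κ ν θm j 0| := abs_sub _ _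
      _ ≤ 3 * m * W * E + m * W := by
          apply add_le_add (h2.trans hg_small)
          rw [abs_mul, abs_mul, abs_of_pos hm, abs_of_pos (Real.exp_pos _)]
          calc m * Real.exp (-(t / m)) * |hb N κ ν θm j 0| ≤ m * 1 * W := by
                apply mul_le_mul _ (hb0 j) (abs_nonneg _) (by positivity)
                apply mul_le_mul_of_nonneg_left hle1 hm.le
            _ = m * W := by ring
      _ ≤ m * (4 * W * E) := by
          nlinarith [mul_pos hm hW0, mul_le_mul_of_nonneg_left hE1 (mul_pos hm hW0).le]
  refine ⟨posb i, ?_⟩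
  -- Step 4 : velocity estimate
  have e1 : deriv (θz i) t = Fk N κ ν i (fun l => θz l t) := hodez i t htT.1
  have e2 : deriv (θm i) t - deriv (θz i) t
      = (hb N κ ν θm i t - Real.exp (-(t / m)) * hb N κ ν θm i 0)
        + Real.exp (-(t / m)) * hb N κ ν θm i 0
        + (Fk N κ ν i (fun l => θm l t) - Fk N κ ν i (fun l => θz l t)) := by
    rw [hb, e1]; ring
  rw [e2]
  calc |hb N κ ν θm i t - Real.exp (-(t / m)) * hb N κ ν θm i 0
        + Real.exp (-(t / m)) * hb N κ ν θm i 0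
        + (Fk N κ ν i (fun l => θm l t) - Fk N κ ν i (fun l => θz l t))|
      ≤ |hb N κ ν θm i t - Real.exp (-(t / m)) * hb N κ ν θm i 0|
        + |Real.exp (-(t / m)) * hb N κ ν θm i 0|
        + |Fk N κ ν i (fun l => θm l t) - Fk N κ ν i (fun l => θz l t)| :=
        (abs_add_le _ _).trans (by gcongr; exact abs_add_le _ _)
    _ ≤ 2 * κ * W * m + Real.exp (-(t / m)) * W
        + 2 * κ * (m * (4 * W * E)) := by
        gcongr
        · exact hbbound i t htT.1
        · rw [abs_mul, abs_of_pos (Real.exp_pos _)]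
          exact mul_le_mul_of_nonneg_left (hb0 i) (Real.exp_pos _).le
        · exact abs_Fk_sub_Fk_le hN hκ.le ν i _ _
            (by nlinarith [mul_pos hm hW0]) posb
    _ = Real.exp (-(t / m)) * W + m * (2 * κ * W + 8 * κ * W * E) := by ring


end Stmt3Aux

/-- Proposition 3.1 (Tikhonov's theorem): as `m → 0⁺` the solution of the inertial
Kuramoto model converges to the solution of the first-order Kuramoto model,
uniformly on `[0,T]` for positions and uniformly on `[T₁,T₂] ⊆ (0,∞)` for velocities. -/
theorem stmt3 (N : ℕ) (hN : 1 ≤ N) (θ0 ω0 ν : Fin N → ℝ) (κ : ℝ) (hκ : 0 < κ)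
    (θz : Fin N → ℝ → ℝ)
    (hθz : IsFirstOrderSol N κ ν θ0 θz) :
    (∀ i, ∀ T : ℝ, 0 < T → ∀ ε : ℝ, 0 < ε → ∃ δ : ℝ, 0 < δ ∧
      ∀ m : ℝ, 0 < m → m < δ →
        ∀ θm : Fin N → ℝ → ℝ, IsInertialSol N m κ ν θ0 ω0 θm →
          ∀ t ∈ Set.Icc (0 : ℝ) T, |θm i t - θz i t| < ε) ∧
    (∀ i, ∀ T₁ T₂ : ℝ, 0 < T₁ → T₁ < T₂ → ∀ ε : ℝ, 0 < ε → ∃ δ : ℝ, 0 < δ ∧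
      ∀ m : ℝ, 0 < m → m < δ →
        ∀ θm : Fin N → ℝ → ℝ, IsInertialSol N m κ ν θ0 ω0 θm →
          ∀ t ∈ Set.Icc T₁ T₂, |deriv (θm i) t - deriv (θz i) t| < ε) := by
  classical
  haveI : Nonempty (Fin N) := Fin.pos_iff_nonempty.mp hN
  set W : ℝ := (∑ j, (|ω0 j| + |ν j|)) + κ with hWdef
  have hW : ∀ i, |ω0 i| + |ν i| + κ ≤ W := by
    intro i
    have h1 : |ω0 i| + |ν i| ≤ ∑ j, (|ω0 j| + |ν j|) :=
      Finset.single_le_sum (f := fun j => |ω0 j| + |ν j|)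
        (fun j _ => by positivity) (Finset.mem_univ i)
    simp only [hWdef]
    linarith
  have hW0 : 0 < W := by
    have h := hW (Classical.arbitrary (Fin N))
    have h2 := abs_nonneg (ω0 (Classical.arbitrary (Fin N)))
    have h3 := abs_nonneg (ν (Classical.arbitrary (Fin N)))
    linarith
  constructor
  · intro i T hT ε hε
    set C := 4 * W * Real.exp (2 * κ * T) with hC
    have hC0 : 0 < C := by
      have := Real.exp_pos (2 * κ * T)
      rw [hC]; nlinarith
    refine ⟨ε / (C + 1), div_pos hε (by linarith), ?_⟩
    intro m hm hmδ θm hθm t htT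
    have hkey := Stmt3Aux.key hN θ0 ω0 ν hκ θz hθz hW hm θm hθm hT t htT i
    have h1 : |θm i t - θz i t| ≤ m * C := hkey.1
    have h2 : m * (C + 1) < ε := (lt_div_iff₀ (by linarith)).mp hmδ
    nlinarith
  · intro i T₁ T₂ hT₁ hT12 ε hε
    set C := W / T₁ + (2 * κ * W + 8 * κ * W * Real.exp (2 * κ * T₂)) with hC
    have hC0 : 0 < C := by
      have h := Real.exp_pos (2 * κ * T₂)
      have h2 := div_pos hW0 hT₁
      rw [hC]
      nlinarith [mul_pos hκ hW0, mul_pos (mul_pos hκ hW0) h]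
    refine ⟨ε / (C + 1), div_pos hε (by linarith), ?_⟩
    intro m hm hmδ θm hθm t htT
    have hT2 : 0 < T₂ := lt_trans hT₁ hT12
    have htT' : t ∈ Set.Icc (0:ℝ) T₂ := ⟨le_trans hT₁.le htT.1, htT.2⟩
    have hkey := Stmt3Aux.key hN θ0 ω0 ν hκ θz hθz hW hm θm hθm hT2 t htT' i
    have h1 := hkey.2
    have hexp : Real.exp (-(t / m)) ≤ m / T₁ := by
      have h3 : Real.exp (-(t / m)) ≤ Real.exp (-(T₁ / m)) := by
        apply Real.exp_le_exp.mpr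
        rw [neg_le_neg_iff]
        exact div_le_div_of_nonneg_right htT.1 hm.le
      have hx : 0 < T₁ / m := div_pos hT₁ hm
      have h4 : T₁ / m ≤ Real.exp (T₁ / m) := by
        linarith [Real.add_one_le_exp (T₁ / m)]
      have h5 : Real.exp (-(T₁ / m)) ≤ m / T₁ := by
        rw [Real.exp_neg]
        calc (Real.exp (T₁ / m))⁻¹ ≤ (T₁ / m)⁻¹ := by
              apply inv_anti₀ hx h4
          _ = m / T₁ := by rw [inv_div]
      linarith
    have h7 : Real.exp (-(t / m)) * W ≤ m / T₁ * W :=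
      mul_le_mul_of_nonneg_right hexp hW0.le
    have h6 : |deriv (θm i) t - deriv (θz i) t| ≤ m * C := by
      rw [hC]
      calc |deriv (θm i) t - deriv (θz i) t|
          ≤ Real.exp (-(t / m)) * W
            + m * (2 * κ * W + 8 * κ * W * Real.exp (2 * κ * T₂)) := h1
        _ ≤ m / T₁ * W + m * (2 * κ * W + 8 * κ * W * Real.exp (2 * κ * T₂)) := by
            linarith [h7]
        _ = m * (W / T₁ + (2 * κ * W + 8 * κ * W * Real.exp (2 * κ * T₂))) := by
            ring
    have h2 : m * (C + 1) < ε := (lt_div_iff₀ (by linarith)).mp hmδ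
    nlinarith
end
end

section
/- Let (θ₁,…,θ_N) be the global solution of the inertial Kuramoto model with inertia m > 0, coupling strength κ > 0, natural frequencies ν₁,…,ν_N, and initial data (θᵢ⁰, ωᵢ⁰), and write ωᵢ(t) = θ̇ᵢ(t). Then for all i, j ∈ {1,…,N} and all t ≥ 0: (1) e^{−t/m} ωᵢ⁰ + (1−e^{−t/m})(νᵢ − κ) ≤ ωᵢ(t) ≤ e^{−t/m} ωᵢ⁰ + (1−e^{−t/m})(νᵢ + κ); (2) |ωᵢ(t) − ωⱼ(t)| ≤ e^{−t/m}|ωᵢ⁰ − ωⱼ⁰| + (1−e^{−t/m})(|νᵢ − νⱼ| + 2κ); (3) max_{i,j}|ωᵢ(t) − ωⱼ(t)| ≤ e^{−t/m} max_{i,j}|ωᵢ⁰ − ωⱼ⁰| + (1−e^{−t/m})(max_{i,j}|νᵢ − νⱼ| + 2κ). -/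
open Filter Topology MeasureTheory intervalIntegral

noncomputable section

lemma key_ode (m : ℝ) (hm : 0 < m) (g : ℝ → ℝ)
    (hgd : Differentiable ℝ g) (hgd' : Continuous (deriv g)) (a b : ℝ)
    (hab : ∀ s : ℝ, 0 ≤ s → a ≤ m * deriv g s + g s ∧ m * deriv g s + g s ≤ b)
    (t : ℝ) (ht : 0 ≤ t) :
    Real.exp (-t / m) * g 0 + (1 - Real.exp (-t / m)) * a ≤ g t ∧
    g t ≤ Real.exp (-t / m) * g 0 + (1 - Real.exp (-t / m)) * b := by
  set F : ℝ → ℝ := fun s => Real.exp (s / m) / m * (m * deriv g s + g s) with hF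
  have hh : ∀ s : ℝ, HasDerivAt (fun u => Real.exp (u / m) * g u) (F s) s := by
    intro s
    have h1 : HasDerivAt (fun u : ℝ => Real.exp (u / m)) (Real.exp (s / m) * (1 / m)) s := by
      have := (Real.hasDerivAt_exp (s / m)).comp s ((hasDerivAt_id s).div_const m)
      exact this
    have h2 := (hgd s).hasDerivAt
    have : HasDerivAt (fun u => Real.exp (u / m) * g u) _ s := h1.mul h2
    convert this using 1
    simp only [F]
    field_simp [hF]
    ring
  have hFcont : Continuous F := by
    apply Continuous.mul
    · exact ((Real.continuous_exp.comp (continuous_id.div_const m)).div_const m)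
    · exact (continuous_const.mul hgd').add hgd.continuous
  have hsub : ∫ s in (0:ℝ)..t, F s = Real.exp (t / m) * g t - g 0 := by
    have := intervalIntegral.integral_eq_sub_of_hasDerivAt
      (f := fun u => Real.exp (u / m) * g u) (f' := F)
      (fun x _ => hh x) (hFcont.intervalIntegrable 0 t)
    simpa using this
  have hexpint : ∀ c : ℝ, ∫ s in (0:ℝ)..t, Real.exp (s / m) / m * c
      = (Real.exp (t / m) - 1) * c := by
    intro c
    have h1 : ∫ s in (0:ℝ)..t, Real.exp (s / m) = m * (Real.exp (t / m) - 1) := by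
      rw [intervalIntegral.integral_comp_div (fun x => Real.exp x) hm.ne']
      simp [integral_exp]
    rw [show (fun s : ℝ => Real.exp (s / m) / m * c) = fun s : ℝ => (c / m) * Real.exp (s / m)
        by funext s; ring]
    rw [intervalIntegral.integral_const_mul, h1]
    field_simp
  have hupper : ∫ s in (0:ℝ)..t, F s ≤ (Real.exp (t / m) - 1) * b := by
    rw [← hexpint b]
    apply intervalIntegral.integral_mono_on ht (hFcont.intervalIntegrable 0 t)
      ((Continuous.intervalIntegrable (by continuity) 0 t))
    intro s hs
    exact mul_le_mul_of_nonneg_left (hab s hs.1).2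
      (by positivity)
  have hlower : (Real.exp (t / m) - 1) * a ≤ ∫ s in (0:ℝ)..t, F s := by
    rw [← hexpint a]
    apply intervalIntegral.integral_mono_on ht
      ((Continuous.intervalIntegrable (by continuity) 0 t)) (hFcont.intervalIntegrable 0 t)
    intro s hs
    exact mul_le_mul_of_nonneg_left (hab s hs.1).1 (by positivity)
  have hE : Real.exp (-t / m) * Real.exp (t / m) = 1 := by
    rw [← Real.exp_add]; simp [neg_div]
  have hEpos := Real.exp_pos (-t / m)
  have hup' : Real.exp (t / m) * g t - g 0 ≤ (Real.exp (t / m) - 1) * b := by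
    rw [← hsub]; exact hupper
  have hlo' : (Real.exp (t / m) - 1) * a ≤ Real.exp (t / m) * g t - g 0 := by
    rw [← hsub]; exact hlower
  have e1 : Real.exp (-t / m) * (Real.exp (t / m) * g t - g 0)
      = g t - Real.exp (-t / m) * g 0 := by linear_combination g t * hE
  have e2 : ∀ c : ℝ, Real.exp (-t / m) * ((Real.exp (t / m) - 1) * c)
      = (1 - Real.exp (-t / m)) * c := by
    intro c; linear_combination c * hE
  constructor
  · have := mul_le_mul_of_nonneg_left hlo' hEpos.le
    rw [e1, e2] at this; linarith
  · have := mul_le_mul_of_nonneg_left hup' hEpos.le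
    rw [e1, e2] at this; linarith

lemma sum_sin_bound (N : ℕ) (hN : 1 ≤ N) (κ : ℝ) (hκ : 0 < κ) (f : Fin N → ℝ) :
    |(κ / N) * ∑ j, Real.sin (f j)| ≤ κ := by
  rw [abs_mul]
  have h1 : |∑ j, Real.sin (f j)| ≤ (N : ℝ) := by
    calc |∑ j, Real.sin (f j)| ≤ ∑ j, |Real.sin (f j)| := Finset.abs_sum_le_sum_abs _ _
    _ ≤ ∑ _j : Fin N, (1:ℝ) := Finset.sum_le_sum fun j _ => Real.abs_sin_le_one _
    _ = (N : ℝ) := by simp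
  have hNpos : (0:ℝ) < N := by exact_mod_cast hN
  have h2 : |κ / N| = κ / N := abs_of_pos (by positivity)
  rw [h2]
  calc κ / N * |∑ j, Real.sin (f j)| ≤ κ / N * N :=
        mul_le_mul_of_nonneg_left h1 (by positivity)
  _ = κ := by field_simp

/-- Lemma 2.2 (finite propagation speed). -/
theorem stmt10 (N : ℕ) (hN : 1 ≤ N) (θ0 ω0 ν : Fin N → ℝ) (κ m : ℝ)
    (hκ : 0 < κ) (hm : 0 < m)
    (θ : Fin N → ℝ → ℝ)
    (hθ : IsInertialSol N m κ ν θ0 ω0 θ) :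
    ∀ i j, ∀ t : ℝ, 0 ≤ t →
      (Real.exp (-t / m) * ω0 i + (1 - Real.exp (-t / m)) * (ν i - κ) ≤ deriv (θ i) t ∧
        deriv (θ i) t ≤ Real.exp (-t / m) * ω0 i + (1 - Real.exp (-t / m)) * (ν i + κ)) ∧
      |deriv (θ i) t - deriv (θ j) t| ≤
        Real.exp (-t / m) * |ω0 i - ω0 j| + (1 - Real.exp (-t / m)) * (|ν i - ν j| + 2 * κ) ∧
      (⨆ i', ⨆ j', |deriv (θ i') t - deriv (θ j') t|) ≤
        Real.exp (-t / m) * (⨆ i', ⨆ j', |ω0 i' - ω0 j'|) +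
          (1 - Real.exp (-t / m)) * ((⨆ i', ⨆ j', |ν i' - ν j'|) + 2 * κ) := by
  obtain ⟨hsm, hθ0, hω0, hode⟩ := hθ
  have hsm' : ∀ i, ContDiff ℝ (⊤ : ℕ∞) (θ i) := fun i => (hsm i).of_le (by simp)
  have hd1 : ∀ i, Differentiable ℝ (deriv (θ i)) := fun i =>
    ((contDiff_infty_iff_deriv.mp (hsm' i)).2).differentiable (by simp)
  have hd2 : ∀ i, Continuous (deriv (deriv (θ i))) := fun i =>
    ((contDiff_infty_iff_deriv.mp ((contDiff_infty_iff_deriv.mp (hsm' i)).2)).2).continuous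
  -- part 1 for each i
  have part1 : ∀ i, ∀ t : ℝ, 0 ≤ t →
      Real.exp (-t / m) * ω0 i + (1 - Real.exp (-t / m)) * (ν i - κ) ≤ deriv (θ i) t ∧
      deriv (θ i) t ≤ Real.exp (-t / m) * ω0 i + (1 - Real.exp (-t / m)) * (ν i + κ) := by
    intro i t ht
    have := key_ode m hm (deriv (θ i)) (hd1 i) (hd2 i) (ν i - κ) (ν i + κ)
      (fun s hs => by
        rw [hode i s hs]
        have := abs_le.mp (sum_sin_bound N hN κ hκ (fun j => θ j s - θ i s))
        constructor <;> linarith [this.1, this.2]) t ht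
    rw [hω0 i] at this
    exact this
  -- part 2
  have part2 : ∀ i j, ∀ t : ℝ, 0 ≤ t →
      |deriv (θ i) t - deriv (θ j) t| ≤
        Real.exp (-t / m) * |ω0 i - ω0 j| +
          (1 - Real.exp (-t / m)) * (|ν i - ν j| + 2 * κ) := by
    intro i j t ht
    set g : ℝ → ℝ := fun s => deriv (θ i) s - deriv (θ j) s with hg
    have hgderiv : ∀ s, deriv g s = deriv (deriv (θ i)) s - deriv (deriv (θ j)) s := by
      intro s
      exact deriv_sub ((hd1 i).differentiableAt) ((hd1 j).differentiableAt)
    have hgd : Differentiable ℝ g := (hd1 i).sub (hd1 j)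
    have hgd' : Continuous (deriv g) := by
      have : deriv g = fun s => deriv (deriv (θ i)) s - deriv (deriv (θ j)) s :=
        funext hgderiv
      rw [this]
      exact (hd2 i).sub (hd2 j)
    have hkey := key_ode m hm g hgd hgd' (-(|ν i - ν j| + 2 * κ)) (|ν i - ν j| + 2 * κ)
      (fun s hs => by
        rw [hgderiv s]
        have e : m * (deriv (deriv (θ i)) s - deriv (deriv (θ j)) s) + g s
            = (ν i - ν j) + ((κ / N) * ∑ k, Real.sin (θ k s - θ i s)
              - (κ / N) * ∑ k, Real.sin (θ k s - θ j s)) := by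
          have h1 := hode i s hs
          have h2 := hode j s hs
          simp only [hg]
          linarith
        rw [e]
        have b1 := abs_le.mp (sum_sin_bound N hN κ hκ (fun k => θ k s - θ i s))
        have b2 := abs_le.mp (sum_sin_bound N hN κ hκ (fun k => θ k s - θ j s))
        have bν := abs_le.mp (le_refl |ν i - ν j|)
        constructor <;>
          [linarith [neg_abs_le (ν i - ν j), b1.1, b2.2];
           linarith [le_abs_self (ν i - ν j), b1.2, b2.1]]) t ht
    have hg0 : g 0 = ω0 i - ω0 j := by simp [hg, hω0 i, hω0 j]
    rw [hg0] at hkey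
    have hEpos := (Real.exp_pos (-t / m)).le
    have hE1 : Real.exp (-t / m) ≤ 1 := by
      apply Real.exp_le_one_iff.mpr
      apply div_nonpos_of_nonpos_of_nonneg <;> linarith
    have habs := abs_le.mp (le_refl |ω0 i - ω0 j|)
    rw [abs_le]
    constructor
    · have h := hkey.1
      nlinarith [neg_abs_le (ω0 i - ω0 j), abs_nonneg (ν i - ν j)]
    · have h := hkey.2
      nlinarith [le_abs_self (ω0 i - ω0 j), abs_nonneg (ν i - ν j)]
  intro i j t ht
  refine ⟨part1 i t ht, part2 i j t ht, ?_⟩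
  -- part 3
  have hne : Nonempty (Fin N) := ⟨⟨0, hN⟩⟩
  have hEpos := (Real.exp_pos (-t / m)).le
  have hE1 : (0:ℝ) ≤ 1 - Real.exp (-t / m) := by
    have : Real.exp (-t / m) ≤ 1 := by
      apply Real.exp_le_one_iff.mpr
      apply div_nonpos_of_nonpos_of_nonneg <;> linarith
    linarith
  have hbdd : ∀ f : Fin N → ℝ, BddAbove (Set.range f) := fun f =>
    Set.Finite.bddAbove (Set.finite_range f)
  refine ciSup_le fun i' => ciSup_le fun j' => ?_
  refine (part2 i' j' t ht).trans ?_
  gcongr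
  · calc |ω0 i' - ω0 j'| ≤ ⨆ j'', |ω0 i' - ω0 j''| :=
        le_ciSup (f := fun j'' => |ω0 i' - ω0 j''|) (hbdd _) j'
    _ ≤ ⨆ i'', ⨆ j'', |ω0 i'' - ω0 j''| :=
        le_ciSup (f := fun i'' => ⨆ j'', |ω0 i'' - ω0 j''|) (hbdd _) i'
  · calc |ν i' - ν j'| ≤ ⨆ j'', |ν i' - ν j''| :=
        le_ciSup (f := fun j'' => |ν i' - ν j''|) (hbdd _) j'
    _ ≤ ⨆ i'', ⨆ j'', |ν i'' - ν j''| :=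
        le_ciSup (f := fun i'' => ⨆ j'', |ν i'' - ν j''|) (hbdd _) i'
end
end

section
/- Let a, b, c > 0 and define T* = ∞ if 4ac ≤ b², and T* = πa/√(4ac−b²) + (2a/√(4ac−b²)) · arcsin(b/(2√(ac))) if 4ac > b². Let I ⊆ ℝ be a connected interval and y : I → ℝ a continuous function such that for every subinterval J ⊆ I on which y > 0 pointwise, y is twice continuously differentiable on J and a ÿ(t) + b ẏ(t) + c y(t) > 0 for all t ∈ J. If there exists t₀ ∈ I with y(t₀) > 0 and ẏ(t₀) ≥ 0, then y(t) > 0 for all t ∈ I ∩ [t₀, t₀ + T*] (all t ∈ I with t ≥ t₀, in the case T* = ∞). -/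
/-!
Compare `y` with a solution `z` of `a z'' + b z' + c z = 0` such that `z(t₀) > 0`, `z'(t₀) ≤ 0`
and `z > 0` on `[t₀, t₀ + T*)`: `z = exp (λ (s - t₀))` for a root `λ ≤ 0` of `a λ² + b λ + c` when
`4ac ≤ b²`, and otherwise the damped oscillation `exp (λ τ) (cos ωτ - (λ/ω) sin ωτ)`, where
`τ = s - t₀`, `λ = -b/2a`, `ω = √(4ac - b²)/2a`, whose first zero is `τ = T*`.
If `y` had a first zero `t₁` in that range, the weighted Wronskian
`W = exp (b s / a) (y' z - y z')` would have `W' = exp (b s / a) (a y'' + b y' + c y) z / a > 0`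
on `(t₀, t₁)` and `W(t₀) ≥ 0`, so `W` would stay above some `δ > 0` near `t₁`. But `y(t₁) = 0`
forces `y' < 0` at points arbitrarily close to `t₁`, and there `W < -exp (b s / a) y z' → 0`.
-/

open Set Real Filter Topology

theorem ContinuousOn.exists_eq_zero_forall_pos_Ico {f : ℝ → ℝ} {a b : ℝ} (hab : a ≤ b)
    (hf : ContinuousOn f (Icc a b)) (ha : 0 < f a) (hb : f b ≤ 0) :
    ∃ c ∈ Ioc a b, f c = 0 ∧ ∀ x ∈ Ico a c, 0 < f x := by
  set S := Icc a b ∩ f ⁻¹' Iic 0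
  have hS : IsClosed S := hf.preimage_isClosed_of_isClosed isClosed_Icc isClosed_Iic
  have hSne : S.Nonempty := ⟨b, ⟨hab, le_rfl⟩, hb⟩
  have hSbdd : BddBelow S := ⟨a, fun x hx => hx.1.1⟩
  obtain ⟨⟨hac, hcb⟩, hfc⟩ : sInf S ∈ S := hS.csInf_mem hSne hSbdd
  have hpos : ∀ x ∈ Ico a (sInf S), 0 < f x := fun x hx =>
    lt_of_not_ge fun hfx => hx.2.not_ge (csInf_le hSbdd ⟨⟨hx.1, hx.2.le.trans hcb⟩, hfx⟩)
  have hac : a < sInf S := hac.lt_of_ne fun h => (h ▸ ha).not_ge hfc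
  refine ⟨sInf S, ⟨hac, hcb⟩, le_antisymm hfc ?_, hpos⟩
  have hlim : Tendsto f (𝓝[<] sInf S) (𝓝 (f (sInf S))) :=
    (hf.mono (Icc_subset_Icc_right hcb) _ ⟨hac.le, le_rfl⟩).mono_of_mem_nhdsWithin
      (Icc_mem_nhdsLT hac)
  exact ge_of_tendsto hlim (mem_of_superset (Ico_mem_nhdsLT hac) fun x hx => (hpos x hx).le)

theorem frequently_neg_of_hasDerivAt_of_pos_Ico {f f' : ℝ → ℝ} {a b : ℝ} (hab : a < b)
    (hf : ContinuousOn f (Icc a b)) (hf' : ∀ x ∈ Ioo a b, HasDerivAt f (f' x) x)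
    (hpos : ∀ x ∈ Ico a b, 0 < f x) (hb : f b ≤ 0) :
    ∃ᶠ x in 𝓝[<] b, f' x < 0 := by
  intro hnonneg
  obtain ⟨u, hu, hsub⟩ := (mem_nhdsLT_iff_exists_mem_Ico_Ioo_subset hab).1 hnonneg
  have hmono : MonotoneOn f (Icc u b) :=
    monotoneOn_of_hasDerivWithinAt_nonneg (convex_Icc u b) (hf.mono (Icc_subset_Icc_left hu.1))
      (fun x hx => by
        rw [interior_Icc] at hx ⊢
        exact (hf' x ⟨hu.1.trans_lt hx.1, hx.2⟩).hasDerivWithinAt)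
      (fun x hx => by rw [interior_Icc] at hx; exact not_lt.1 (hsub hx))
  have := hmono ⟨le_rfl, hu.2.le⟩ ⟨hu.2.le, le_rfl⟩ hu.2.le
  linarith [hpos u hu]

theorem hasDerivAt_exp_mul_wronskian {a b c : ℝ} (ha : a ≠ 0) {y y' y'' z z' z'' : ℝ → ℝ} {s : ℝ}
    (hy : HasDerivAt y (y' s) s) (hy' : HasDerivAt y' (y'' s) s)
    (hz : HasDerivAt z (z' s) s) (hz' : HasDerivAt z' (z'' s) s)
    (hzode : a * z'' s + b * z' s + c * z s = 0) :
    HasDerivAt (fun s => exp (b / a * s) * (y' s * z s - y s * z' s))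
      (exp (b / a * s) * ((a * y'' s + b * y' s + c * y s) * z s) / a) s := by
  have hexp : HasDerivAt (fun s => exp (b / a * s)) (exp (b / a * s) * (b / a)) s := by
    simpa using ((hasDerivAt_id s).const_mul (b / a)).exp
  refine (hexp.mul ((hy'.mul hz).sub (hy.mul hz'))).congr_deriv ?_
  have hz'' : z'' s = -(b * z' s + c * z s) / a := by
    field_simp
    linarith
  simp only [Pi.sub_apply, Pi.mul_apply, hz'']
  field_simp
  ring

theorem differentiableWithinAt_of_differentiableOn_of_pos {I : Set ℝ} {y : ℝ → ℝ} {t₀ : ℝ}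
    (hI : I.OrdConnected) (hy : ContinuousWithinAt y I t₀) (ht₀ : t₀ ∈ I) (hyt₀ : 0 < y t₀)
    (hdiff : ∀ J ⊆ I, J.OrdConnected → (∀ t ∈ J, 0 < y t) → DifferentiableOn ℝ y J) :
    DifferentiableWithinAt ℝ y I t₀ := by
  obtain ⟨ε, hε, hball⟩ := Metric.mem_nhdsWithin_iff.1 (hy (Ioi_mem_nhds hyt₀))
  have hJ : (I ∩ Metric.ball t₀ ε).OrdConnected := by
    rw [Real.ball_eq_Ioo]
    exact hI.inter ordConnected_Ioo
  exact (hdiff _ inter_subset_left hJ (fun t ht => hball ⟨ht.2, ht.1⟩) t₀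
    ⟨ht₀, Metric.mem_ball_self hε⟩).mono_of_mem_nhdsWithin
      (inter_mem_nhdsWithin I (Metric.ball_mem_nhds t₀ hε))

theorem strictMonoOn_exp_mul_wronskian {a b c : ℝ} (ha : 0 < a) {p q : ℝ}
    {y y' y'' z z' z'' : ℝ → ℝ} (hyc : ContinuousOn y (Ico p q)) (hy'c : ContinuousOn y' (Ico p q))
    (hy : ∀ s ∈ Ioo p q, HasDerivAt y (y' s) s) (hy' : ∀ s ∈ Ioo p q, HasDerivAt y' (y'' s) s)
    (hL : ∀ s ∈ Ioo p q, 0 < a * y'' s + b * y' s + c * y s)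
    (hz : ∀ s, HasDerivAt z (z' s) s) (hz' : ∀ s, HasDerivAt z' (z'' s) s)
    (hzode : ∀ s, a * z'' s + b * z' s + c * z s = 0) (hzpos : ∀ s ∈ Ioo p q, 0 < z s) :
    StrictMonoOn (fun s => exp (b / a * s) * (y' s * z s - y s * z' s)) (Ico p q) := by
  refine strictMonoOn_of_hasDerivWithinAt_pos (convex_Ico p q) ?_ (fun s hs => ?_) (fun s hs => ?_)
    (f' := fun s => exp (b / a * s) * ((a * y'' s + b * y' s + c * y s) * z s) / a)
  · have hzc : Continuous z := continuous_iff_continuousAt.2 fun s => (hz s).continuousAt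
    have hz'c : Continuous z' := continuous_iff_continuousAt.2 fun s => (hz' s).continuousAt
    fun_prop
  · rw [interior_Ico] at hs
    exact (hasDerivAt_exp_mul_wronskian ha.ne' (hy s hs) (hy' s hs) (hz s) (hz' s)
      (hzode s)).hasDerivWithinAt
  · rw [interior_Ico] at hs
    have := hL s hs
    have := hzpos s hs
    positivity

theorem frequently_exp_mul_wronskian_lt {k t₀ t₁ δ : ℝ} (ht : t₀ < t₁) {y y' z z' : ℝ → ℝ}
    (hyc : ContinuousOn y (Icc t₀ t₁)) (hy : ∀ s ∈ Ioo t₀ t₁, HasDerivAt y (y' s) s)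
    (hpos : ∀ s ∈ Ico t₀ t₁, 0 < y s) (hyt₁ : y t₁ = 0) (hzpos : ∀ s ∈ Ioo t₀ t₁, 0 < z s)
    (hz' : ContinuousAt z' t₁) (hδ : 0 < δ) :
    ∃ᶠ s in 𝓝[<] t₁, exp (k * s) * (y' s * z s - y s * z' s) < δ := by
  have hlim : Tendsto (fun s => exp (k * s) * (y s * z' s)) (𝓝[<] t₁) (𝓝 0) := by
    have hcont : ContinuousWithinAt (fun s => exp (k * s) * (y s * z' s)) (Icc t₀ t₁) t₁ :=
      (continuous_exp.comp (continuous_const.mul continuous_id)).continuousWithinAt.mul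
        ((hyc t₁ ⟨ht.le, le_rfl⟩).mul hz'.continuousWithinAt)
    simpa [hyt₁] using (hcont.mono_of_mem_nhdsWithin (Icc_mem_nhdsLT ht)).tendsto
  refine ((frequently_neg_of_hasDerivAt_of_pos_Ico ht hyc hy hpos hyt₁.le).and_eventually
    ((hlim.eventually_const_lt (neg_neg_of_pos hδ)).and (Ioo_mem_nhdsLT ht))).mono ?_
  rintro s ⟨hy's, hPs, hs⟩
  have : exp (k * s) * z s * y' s < 0 :=
    mul_neg_of_pos_of_neg (mul_pos (exp_pos _) (hzpos s hs)) hy's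
  linarith

theorem pos_of_sturm_comparison {a b c : ℝ} (ha : 0 < a) {I : Set ℝ} (hI : I.OrdConnected)
    {y : ℝ → ℝ} (hy : ContinuousOn y I)
    (hode : ∀ J : Set ℝ, J ⊆ I → J.OrdConnected → (∀ t ∈ J, 0 < y t) →
      ContDiffOn ℝ 2 y J ∧
      ∀ t ∈ J, 0 < a * derivWithin (derivWithin y J) J t + b * derivWithin y J t + c * y t)
    {t₀ : ℝ} (ht₀ : t₀ ∈ I) (hyt₀ : 0 < y t₀) (hyt₀' : 0 ≤ derivWithin y I t₀)
    {z z' z'' : ℝ → ℝ} (hz : ∀ s, HasDerivAt z (z' s) s) (hz' : ∀ s, HasDerivAt z' (z'' s) s)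
    (hzode : ∀ s, a * z'' s + b * z' s + c * z s = 0) (hzt₀ : 0 < z t₀) (hz't₀ : z' t₀ ≤ 0)
    {t : ℝ} (ht : t ∈ I) (ht₀t : t₀ ≤ t) (hzpos : ∀ s ∈ Ico t₀ t, 0 < z s) : 0 < y t := by
  by_contra! hyt
  have hIcc : Icc t₀ t ⊆ I := hI.out ht₀ ht
  obtain ⟨t₁, ⟨ht₀t₁, ht₁t⟩, hyt₁, hpos⟩ :=
    (hy.mono hIcc).exists_eq_zero_forall_pos_Ico ht₀t hyt₀ hyt
  have hIcc₁ : Icc t₀ t₁ ⊆ I := (Icc_subset_Icc_right ht₁t).trans hIcc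
  set J := Ico t₀ t₁
  have hJI : J ⊆ I := Ico_subset_Icc_self.trans hIcc₁
  obtain ⟨hC2, hL⟩ := hode J hJI ordConnected_Ico hpos
  set y' := derivWithin y J
  have hy'C1 : ContDiffOn ℝ 1 y' J := hC2.derivWithin (uniqueDiffOn_Ico t₀ t₁) (by norm_num)
  have hyd : ∀ s ∈ Ioo t₀ t₁, HasDerivAt y (y' s) s := fun s hs =>
    (hC2.differentiableOn (by norm_num) s (Ioo_subset_Ico_self hs)).hasDerivWithinAt.hasDerivAt
      (Ico_mem_nhds hs.1 hs.2)
  have hy'd : ∀ s ∈ Ioo t₀ t₁, HasDerivAt y' (derivWithin y' J s) s := fun s hs =>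
    (hy'C1.differentiableOn one_ne_zero s (Ioo_subset_Ico_self hs)).hasDerivWithinAt.hasDerivAt
      (Ico_mem_nhds hs.1 hs.2)
  have hzpos₁ : ∀ s ∈ Ioo t₀ t₁, 0 < z s := fun s hs => hzpos s ⟨hs.1.le, hs.2.trans_le ht₁t⟩
  have hW := strictMonoOn_exp_mul_wronskian ha (hy.mono hJI) hy'C1.continuousOn hyd hy'd
    (fun s hs => hL s (Ioo_subset_Ico_self hs)) hz hz' hzode hzpos₁
  have hy't₀ : 0 ≤ y' t₀ := by
    have hdiff : DifferentiableWithinAt ℝ y I t₀ :=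
      differentiableWithinAt_of_differentiableOn_of_pos hI (hy t₀ ht₀) ht₀ hyt₀
        fun J hJ hJc hJp => (hode J hJ hJc hJp).1.differentiableOn (by norm_num)
    rwa [show y' t₀ = _ from
      derivWithin_subset hJI (uniqueDiffOn_Ico t₀ t₁ t₀ ⟨le_rfl, ht₀t₁⟩) hdiff]
  obtain ⟨s₀, hs₀⟩ := nonempty_Ioo.2 ht₀t₁
  have hWs₀ : 0 < exp (b / a * s₀) * (y' s₀ * z s₀ - y s₀ * z' s₀) :=
    (mul_nonneg (exp_pos _).le (by nlinarith)).trans_lt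
      (hW ⟨le_rfl, ht₀t₁⟩ (Ioo_subset_Ico_self hs₀) hs₀.1)
  obtain ⟨s, hWs, hs⟩ := ((frequently_exp_mul_wronskian_lt ht₀t₁ (hy.mono hIcc₁) hyd hpos hyt₁
    hzpos₁ (hz' t₁).continuousAt hWs₀).and_eventually (Ioo_mem_nhdsLT hs₀.2)).exists
  exact hWs.not_gt (hW (Ioo_subset_Ico_self hs₀) ⟨hs₀.1.le.trans hs.1.le, hs.2⟩ hs.1)

theorem exists_nonpos_quadratic_root {a b c : ℝ} (ha : 0 < a) (hb : 0 ≤ b) (hc : 0 ≤ c)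
    (h : 4 * a * c ≤ b ^ 2) : ∃ l ≤ 0, a * l ^ 2 + b * l + c = 0 := by
  set r := √(b ^ 2 - 4 * a * c)
  have hr : r ^ 2 = b ^ 2 - 4 * a * c := sq_sqrt (by linarith)
  have hrb : r ≤ b := by
    rw [← abs_of_nonneg hb, ← sqrt_sq_eq_abs]
    exact sqrt_le_sqrt (by nlinarith)
  refine ⟨(-b + r) / (2 * a), div_nonpos_of_nonpos_of_nonneg (by linarith) (by linarith), ?_⟩
  have : a * ((-b + r) / (2 * a)) ^ 2 + b * ((-b + r) / (2 * a)) + c =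
      (r ^ 2 - (b ^ 2 - 4 * a * c)) / (4 * a) := by
    field_simp
    ring
  rw [this, hr, sub_self, zero_div]

noncomputable def dampedCos (l ω t₀ s : ℝ) : ℝ :=
  exp (l * (s - t₀)) * (cos (ω * (s - t₀)) - l / ω * sin (ω * (s - t₀)))

section dampedCos

variable {l ω t₀ : ℝ}

theorem hasDerivAt_dampedCos (hω : ω ≠ 0) (s : ℝ) :
    HasDerivAt (dampedCos l ω t₀)
      (-((l ^ 2 + ω ^ 2) / ω) * (exp (l * (s - t₀)) * sin (ω * (s - t₀)))) s := by
  have hτ : ∀ k : ℝ, HasDerivAt (fun s => k * (s - t₀)) k s := fun k => by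
    simpa using ((hasDerivAt_id s).sub_const t₀).const_mul k
  refine ((hτ l).exp.mul ((hτ ω).cos.sub ((hτ ω).sin.const_mul (l / ω)))).congr_deriv ?_
  simp only [Pi.sub_apply]
  field_simp
  ring

theorem hasDerivAt_deriv_dampedCos (s : ℝ) :
    HasDerivAt (fun s => -((l ^ 2 + ω ^ 2) / ω) * (exp (l * (s - t₀)) * sin (ω * (s - t₀))))
      (-((l ^ 2 + ω ^ 2) / ω) *
        (exp (l * (s - t₀)) * (l * sin (ω * (s - t₀)) + ω * cos (ω * (s - t₀))))) s := by
  have hτ : ∀ k : ℝ, HasDerivAt (fun s => k * (s - t₀)) k s := fun k => by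
    simpa using ((hasDerivAt_id s).sub_const t₀).const_mul k
  refine (((hτ l).exp.mul (hτ ω).sin).const_mul _).congr_deriv ?_
  ring

theorem dampedCos_ode {a b c : ℝ} (hω : ω ≠ 0) (hb : b = -2 * a * l)
    (hc : c = a * (l ^ 2 + ω ^ 2)) (s : ℝ) :
    a * (-((l ^ 2 + ω ^ 2) / ω) *
        (exp (l * (s - t₀)) * (l * sin (ω * (s - t₀)) + ω * cos (ω * (s - t₀))))) +
      b * (-((l ^ 2 + ω ^ 2) / ω) * (exp (l * (s - t₀)) * sin (ω * (s - t₀)))) +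
      c * dampedCos l ω t₀ s = 0 := by
  rw [dampedCos, hb, hc]
  field_simp
  ring

theorem dampedCos_pos {φ : ℝ} (hφ : φ ∈ Ioo (-(π / 2)) (π / 2))
    (htan : tan φ = -l / ω) {s : ℝ} (hs : ω * (s - t₀) ∈ Ioo (φ - π / 2) (φ + π / 2)) :
    0 < dampedCos l ω t₀ s := by
  have hcosφ : 0 < cos φ := cos_pos_of_mem_Ioo hφ
  have hphase : cos (ω * (s - t₀)) - l / ω * sin (ω * (s - t₀)) =
      cos (ω * (s - t₀) - φ) / cos φ := by
    rw [show l / ω = -tan φ by rw [htan]; ring, tan_eq_sin_div_cos, cos_sub]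
    field_simp
    ring
  have : 0 < cos (ω * (s - t₀) - φ) := cos_pos_of_mem_Ioo ⟨by linarith [hs.1], by linarith [hs.2]⟩
  rw [dampedCos, hphase]
  positivity

end dampedCos

theorem arcsin_div_two_sqrt_mul_mem_Ioo {a b c : ℝ} (h : b ^ 2 < 4 * a * c) :
    arcsin (b / (2 * √(a * c))) ∈ Ioo (-(π / 2)) (π / 2) := by
  have hsq : √(a * c) ^ 2 = a * c := sq_sqrt (by nlinarith [sq_nonneg b])
  have hx : b / (2 * √(a * c)) ∈ Ioo (-1) 1 := by
    rw [mem_Ioo, ← abs_lt, ← sq_lt_one_iff_abs_lt_one, div_pow, mul_pow, hsq]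
    exact (div_lt_one (by nlinarith [sq_nonneg b])).2 (by linarith)
  exact ⟨neg_pi_div_two_lt_arcsin.2 hx.1, arcsin_lt_pi_div_two.2 hx.2⟩

theorem tan_arcsin_div_two_sqrt_mul {a b c : ℝ} (h : b ^ 2 < 4 * a * c) :
    tan (arcsin (b / (2 * √(a * c)))) = b / √(4 * a * c - b ^ 2) := by
  have hac : 0 < a * c := by nlinarith [sq_nonneg b]
  have hsac : 0 < √(a * c) := sqrt_pos.2 hac
  have hsq : √(a * c) ^ 2 = a * c := sq_sqrt hac.le
  have hd : 0 < √(4 * a * c - b ^ 2) := sqrt_pos.2 (by linarith)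
  have hdsq : √(4 * a * c - b ^ 2) ^ 2 = 4 * a * c - b ^ 2 := sq_sqrt (by linarith)
  generalize √(4 * a * c - b ^ 2) = d at hd hdsq ⊢
  have hcos : 1 - (b / (2 * √(a * c))) ^ 2 = (d / (2 * √(a * c))) ^ 2 := by
    field_simp
    linear_combination 4 * hsq - hdsq
  rw [tan_arcsin, hcos, sqrt_sq (by positivity)]
  field_simp

theorem dampedCos_pos_of_mem_Ico {a b c : ℝ} (ha : 0 < a) (h : b ^ 2 < 4 * a * c) {t₀ s : ℝ}
    (hs : s ∈ Ico t₀ (t₀ + (π * a / √(4 * a * c - b ^ 2) +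
      2 * a / √(4 * a * c - b ^ 2) * arcsin (b / (2 * √(a * c)))))) :
    0 < dampedCos (-b / (2 * a)) (√(4 * a * c - b ^ 2) / (2 * a)) t₀ s := by
  have hd : 0 < √(4 * a * c - b ^ 2) := sqrt_pos.2 (by linarith)
  have hω : 0 < √(4 * a * c - b ^ 2) / (2 * a) := by positivity
  have hφ := arcsin_div_two_sqrt_mul_mem_Ioo h
  have htan : tan (arcsin (b / (2 * √(a * c)))) =
      -(-b / (2 * a)) / (√(4 * a * c - b ^ 2) / (2 * a)) := by
    rw [tan_arcsin_div_two_sqrt_mul h]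
    field_simp
  have hT : √(4 * a * c - b ^ 2) / (2 * a) * (π * a / √(4 * a * c - b ^ 2) +
      2 * a / √(4 * a * c - b ^ 2) * arcsin (b / (2 * √(a * c)))) =
      arcsin (b / (2 * √(a * c))) + π / 2 := by
    field_simp
    ring
  refine dampedCos_pos hφ htan ⟨?_, ?_⟩
  · exact (sub_neg.2 hφ.2).trans_le (mul_nonneg hω.le (sub_nonneg.2 hs.1))
  · exact hT ▸ mul_lt_mul_of_pos_left (by linarith [hs.2]) hω

/-- Lemma 5.1 (Sturm–Picone comparison principle): if `y` is positive with
nonnegative derivative at `t₀` and satisfies `a ÿ + b ẏ + c y > 0` on every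
subinterval of `I` where it is positive, then `y` stays positive on
`I ∩ [t₀, t₀ + T*]`, where `T* = ∞` when `4ac ≤ b²` and
`T* = πa/√(4ac−b²) + (2a/√(4ac−b²))·arcsin(b/(2√(ac)))` when `4ac > b²`. -/
theorem stmt15 (a b c : ℝ) (ha : 0 < a) (hb : 0 < b) (hc : 0 < c)
    (I : Set ℝ) (hI : I.OrdConnected)
    (y : ℝ → ℝ) (hy : ContinuousOn y I)
    (hode : ∀ J : Set ℝ, J ⊆ I → J.OrdConnected → (∀ t ∈ J, 0 < y t) →
      ContDiffOn ℝ 2 y J ∧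
      ∀ t ∈ J, 0 < a * derivWithin (derivWithin y J) J t + b * derivWithin y J t + c * y t)
    (t₀ : ℝ) (ht₀ : t₀ ∈ I) (hyt₀ : 0 < y t₀) (hyt₀' : 0 ≤ derivWithin y I t₀) :
    (4 * a * c ≤ b ^ 2 → ∀ t ∈ I, t₀ ≤ t → 0 < y t) ∧
    (b ^ 2 < 4 * a * c → ∀ t ∈ I, t₀ ≤ t →
      t ≤ t₀ + (Real.pi * a / Real.sqrt (4 * a * c - b ^ 2) +
        2 * a / Real.sqrt (4 * a * c - b ^ 2) *
          Real.arcsin (b / (2 * Real.sqrt (a * c)))) →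
      0 < y t) := by
  refine ⟨fun hdisc t ht ht₀t => ?_, fun hdisc t ht ht₀t htT => ?_⟩
  · obtain ⟨l, hl, hroot⟩ := exists_nonpos_quadratic_root ha hb.le hc.le hdisc
    have hz (s : ℝ) : HasDerivAt (fun s => exp (l * (s - t₀))) (exp (l * (s - t₀)) * l) s := by
      simpa using (((hasDerivAt_id s).sub_const t₀).const_mul l).exp
    exact pos_of_sturm_comparison ha hI hy hode ht₀ hyt₀ hyt₀' hz (fun s => (hz s).mul_const l)
      (fun s => by linear_combination exp (l * (s - t₀)) * hroot) (by simp) (by simpa) ht ht₀t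
      fun s _ => exp_pos _
  · have hω : √(4 * a * c - b ^ 2) / (2 * a) ≠ 0 := by
      have : 0 < √(4 * a * c - b ^ 2) := sqrt_pos.2 (by linarith)
      positivity
    refine pos_of_sturm_comparison ha hI hy hode ht₀ hyt₀ hyt₀' (hasDerivAt_dampedCos (t₀ := t₀) hω)
      hasDerivAt_deriv_dampedCos (dampedCos_ode hω (by field_simp) ?_) (by simp [dampedCos])
      (by simp) ht ht₀t fun s hs => dampedCos_pos_of_mem_Ico ha hdisc ⟨hs.1, hs.2.trans_le htT⟩
    rw [div_pow, div_pow, sq_sqrt (by linarith)]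
    field_simp
    ring
end

section
/- Let a, c > 0 and let u : [0,∞) → ℝ be a continuous function satisfying u(t) ≤ c ∫₀ᵗ u(s)(1 − e^{−(t−s)/a}) ds for all t ≥ 0. Then u(t) ≤ 0 for all t ≥ 0. -/
open MeasureTheory intervalIntegral

/-- Lemma A.1 (an integral Grönwall inequality): if a continuous `u` satisfies
`u(t) ≤ c ∫₀ᵗ u(s)(1 − e^{−(t−s)/a}) ds` for all `t ≥ 0`, then `u ≤ 0` on `[0,∞)`. -/
theorem stmt16 (a c : ℝ) (ha : 0 < a) (hc : 0 < c)
    (u : ℝ → ℝ) (hu : ContinuousOn u (Set.Ici 0))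
    (hineq : ∀ t : ℝ, 0 ≤ t →
      u t ≤ c * ∫ s in (0 : ℝ)..t, u s * (1 - Real.exp (-(t - s) / a))) :
    ∀ t : ℝ, 0 ≤ t → u t ≤ 0 := by
  have hucomp : Continuous (fun s : ℝ => u (max s 0)) := by
    have hm : Continuous (fun s : ℝ => max s 0) := continuous_id.max continuous_const
    have h1 : ContinuousOn (fun s : ℝ => u (max s 0)) Set.univ :=
      hu.comp hm.continuousOn (fun x _ => le_max_right x 0)
    exact continuousOn_univ.mp h1
  set v : ℝ → ℝ := fun s => max (u (max s 0)) 0 with hvdef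
  have hvcont : Continuous v := hucomp.max continuous_const
  have hvnn : ∀ s, 0 ≤ v s := fun s => le_max_right _ _
  have hveq : ∀ s, 0 ≤ s → v s = max (u s) 0 := by
    intro s hs
    simp [hvdef, max_eq_left hs]
  set w : ℝ → ℝ := fun t => ∫ s in (0:ℝ)..t, v s with hwdef
  have hwderiv : ∀ x : ℝ, HasDerivAt w (v x) x := fun x =>
    intervalIntegral.integral_hasDerivAt_right (hvcont.intervalIntegrable _ _)
      (hvcont.stronglyMeasurableAtFilter _ _) hvcont.continuousAt
  have hwnn : ∀ x, 0 ≤ x → 0 ≤ w x := fun x hx =>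
    intervalIntegral.integral_nonneg hx (fun s _ => hvnn s)
  have key : ∀ t, 0 ≤ t → u t ≤ c * w t := by
    intro t ht
    refine (hineq t ht).trans ?_
    refine mul_le_mul_of_nonneg_left ?_ hc.le
    apply intervalIntegral.integral_mono_on ht
    · apply ContinuousOn.intervalIntegrable
      apply ContinuousOn.mul
      · apply hu.mono
        rw [Set.uIcc_of_le ht]
        exact fun x hx => hx.1
      · fun_prop
    · exact hvcont.intervalIntegrable _ _
    · intro s hs
      have h1 : Real.exp (-(t - s) / a) ≤ 1 := by
        apply Real.exp_le_one_iff.mpr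
        have : s ≤ t := hs.2
        have := ha
        apply div_nonpos_of_nonpos_of_nonneg <;> nlinarith
      have h0 : (0:ℝ) < Real.exp (-(t - s) / a) := Real.exp_pos _
      have hus : u s ≤ v s := by rw [hveq s hs.1]; exact le_max_left _ _
      nlinarith [mul_nonneg (sub_nonneg.2 hus) (sub_nonneg.2 h1),
        mul_nonneg (hvnn s) h0.le]
  have keyv : ∀ t, 0 ≤ t → v t ≤ c * w t := by
    intro t ht
    rw [hveq t ht]
    exact max_le (key t ht) (mul_nonneg hc.le (hwnn t ht))
  intro t ht
  have hgr := norm_le_gronwallBound_of_norm_deriv_right_le (f := w) (f' := v)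
    (δ := 0) (K := c) (ε := 0) (a := 0) (b := t)
    (fun x _ => (hwderiv x).continuousAt.continuousWithinAt)
    (fun x _ => (hwderiv x).hasDerivWithinAt)
    (by simp [hwdef])
    (by
      intro x hx
      rw [Real.norm_of_nonneg (hvnn x), Real.norm_of_nonneg (hwnn x hx.1)]
      linarith [keyv x hx.1])
  have hwt : ‖w t‖ ≤ 0 := by
    have := hgr t ⟨ht, le_rfl⟩
    simpa [gronwallBound_ε0] using this
  have hw0 : w t = 0 := by
    have := norm_nonneg (w t)
    have : ‖w t‖ = 0 := le_antisymm hwt this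
    simpa using this
  calc u t ≤ c * w t := key t ht
    _ = 0 := by rw [hw0, mul_zero]
end
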